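/- For all integers n ≥ 1, the rational functions Ĝ_n(w,x,z) and Ǧ_n(w,x,z) are equal: Ĝ_n(w,x,z) = Ǧ_n(w,x,z). -/

import Mathlib

open Finset MvPolynomial

noncomputable section

/-- The field of rational functions in three variables `w, x, z` over `ℚ`. -/
abbrev F3 : Type := FractionRing (MvPolynomial (Fin 3) ℚ)

/-- the variable `w` -/
def W : F3 := algebraMap (MvPolynomial (Fin 3) ℚ) F3 (X 0)
/-- the variable `x` -/
def Xv : F3 := algebraMap (MvPolynomial (Fin 3) ℚ) F3 (X 1)
/-- the variable `z` -/
def Zv : F3 := algebraMap (MvPolynomial (Fin 3) ℚ) F3 (X 2)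

/-- `Ĝ_n(w, x, z)`, defined by `Ĝ_1(w,x,z) = 1/(1-w)` and, for `n ≥ 2`,
`Ĝ_n(w,x,z) = ∑_{k=1}^{n-1} Ĝ_k(w,x,z) Ĝ_{n-k}(w+kz,x,z) / (1-w-(n-1)x)`. -/
def Ghat (x z : F3) : ℕ → F3 → F3
  | 0, _ => 0
  | 1, w => 1 / (1 - w)
  | (n + 2), w =>
      ∑ k ∈ (Finset.Icc 1 (n + 1)).attach,
        Ghat x z k.1 w * Ghat x z (n + 2 - k.1) (w + (k.1 : F3) * z) /
          (1 - w - ((n + 1 : ℕ) : F3) * x)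
  termination_by n _ => n
  decreasing_by
  · have := Finset.mem_Icc.mp k.2; omega
  · have := Finset.mem_Icc.mp k.2; omega

/-- `Ǧ_n(w, x, z)`, defined by `Ǧ_1(w,x,z) = 1/(1-w)` and, for `n ≥ 2`,
`Ǧ_n(w,x,z) = ∑_{k=1}^{n-1} Ǧ_k(w+x,x,z) Ǧ_{n-k}(w+kz,x,z) / (1-w)`. -/
def Gcheck (x z : F3) : ℕ → F3 → F3
  | 0, _ => 0
  | 1, w => 1 / (1 - w)
  | (n + 2), w =>
      ∑ k ∈ (Finset.Icc 1 (n + 1)).attach,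
        Gcheck x z k.1 (w + x) * Gcheck x z (n + 2 - k.1) (w + (k.1 : F3) * z) /
          (1 - w)
  termination_by n _ => n
  decreasing_by
  · have := Finset.mem_Icc.mp k.2; omega
  · have := Finset.mem_Icc.mp k.2; omega

/-!
Write `Ǧ'_n(w)` for the divided difference `(Ǧ_n(w + x) - Ǧ_n(w)) / x`. Substituting
`Ǧ_k(w + x) = Ǧ_k(w) + x Ǧ'_k(w)` into the recursion of `Ǧ` shows that `Ǧ` satisfies the recursion
of `Ĝ` once `∑_k Ǧ'_k(w) Ǧ_{n-k}(w + kz) = (n - 1) Ǧ_n(w)`: the extra terms move the denominator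
from `1 - w` to `1 - w - (n - 1)x`, and then `Ĝ = Ǧ` by induction. The divided difference is the
explicit convolution `Ǧ'_n(w) = ∑_i (n + 1 - i) Ǧ_i(w) Ǧ_{n+1-i}(w + x + (i - 1)z)`; expanding
`(1 - w) Ǧ_i(w)` in it gives `(1 - w) Ǧ'_n(w) = n Ǧ_n(w + x) + ∑_k Ǧ_k(w + x) Ǧ'_{n-k}(w + kz)`,
from which the identity above and the difference formula follow by strong induction on `n`.

The paper's sums over `1 ≤ k ≤ n - 1` are written over `antidiagonal n`; the extra terms vanish
because `Ĝ_0 = Ǧ_0 = 0`.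
-/

namespace Finset.Nat

variable {M : Type*} [AddCommMonoid M]

theorem sum_antidiagonal_antidiagonal_assoc (n : ℕ) (f : ℕ → ℕ → ℕ → M) :
    ∑ p ∈ antidiagonal n, ∑ q ∈ antidiagonal p.1, f q.1 q.2 p.2 =
      ∑ p ∈ antidiagonal n, ∑ q ∈ antidiagonal p.2, f p.1 q.1 q.2 := by
  simp only [Finset.sum_sigma']
  apply Finset.sum_nbij' (fun ⟨⟨_, j⟩, ⟨k, l⟩⟩ ↦ ⟨(k, l + j), (l, j)⟩)
    (fun ⟨⟨i, _⟩, ⟨k, l⟩⟩ ↦ ⟨(i + k, l), (i, k)⟩) <;> aesop (add simp [add_assoc])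

theorem sum_Icc_eq_sum_antidiagonal (n : ℕ) (f : ℕ → ℕ → M) (h₀ : f 0 n = 0) (hₙ : f n 0 = 0) :
    ∑ k ∈ Icc 1 (n - 1), f k (n - k) = ∑ p ∈ antidiagonal n, f p.1 p.2 := by
  rw [sum_antidiagonal_eq_sum_range_succ f]
  refine sum_subset (fun k hk ↦ by simp at hk ⊢; omega) fun k hk hk' ↦ ?_
  obtain rfl | rfl : k = 0 ∨ k = n := by simp at hk hk'; omega
  · exact h₀
  · simpa using hₙ

end Finset.Nat

section Recursions

variable {x z : F3}

@[simp] lemma Gcheck_zero (w : F3) : Gcheck x z 0 w = 0 := by rw [Gcheck]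

lemma Gcheck_one (w : F3) : Gcheck x z 1 w = 1 / (1 - w) := by rw [Gcheck]

lemma one_sub_mul_Gcheck {w : F3} (hw : 1 - w ≠ 0) (n : ℕ) :
    (1 - w) * Gcheck x z n w = (if n = 1 then 1 else 0) +
      ∑ p ∈ antidiagonal n, Gcheck x z p.1 (w + x) * Gcheck x z p.2 (w + p.1 * z) := by
  match n with
  | 0 => simp
  | 1 => simp [Gcheck_one, hw, Nat.sum_antidiagonal_succ]
  | m + 2 =>
    rw [Gcheck, ← sum_div, sum_attach (Icc 1 (m + 1))
      (fun k ↦ Gcheck x z k (w + x) * Gcheck x z (m + 2 - k) (w + k * z)),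
      mul_div_cancel₀ _ hw, ← Nat.sum_Icc_eq_sum_antidiagonal (m + 2)
        (fun i j ↦ Gcheck x z i (w + x) * Gcheck x z j (w + i * z)) (by simp) (by simp)]
    simp

@[simp] lemma Ghat_zero (w : F3) : Ghat x z 0 w = 0 := by rw [Ghat]

lemma Ghat_one (w : F3) : Ghat x z 1 w = 1 / (1 - w) := by rw [Ghat]

lemma one_sub_sub_mul_Ghat {n : ℕ} (hn : n ≠ 1) {w : F3} (hw : 1 - w - (n - 1) * x ≠ 0) :
    (1 - w - (n - 1) * x) * Ghat x z n w =
      ∑ p ∈ antidiagonal n, Ghat x z p.1 w * Ghat x z p.2 (w + p.1 * z) := by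
  match n, hn with
  | 0, _ => simp
  | m + 2, _ =>
    have hden : ((m + 2 : ℕ) : F3) - 1 = (m + 1 : ℕ) := by push_cast; ring
    rw [hden] at hw ⊢
    rw [Ghat, ← sum_div, sum_attach (Icc 1 (m + 1))
      (fun k ↦ Ghat x z k w * Ghat x z (m + 2 - k) (w + k * z)),
      mul_div_cancel₀ _ hw, ← Nat.sum_Icc_eq_sum_antidiagonal (m + 2)
        (fun i j ↦ Ghat x z i w * Ghat x z j (w + i * z)) (by simp) (by simp)]
    rfl

end Recursions

def Admissible (x z w : F3) : Prop := ∀ a b : ℕ, 1 - w - a * x - b * z ≠ 0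

namespace Admissible

variable {x z w : F3}

lemma one_sub_sub_ne_zero (hw : Admissible x z w) (n : ℕ) : 1 - w - n * x ≠ 0 := by
  simpa using hw n 0

lemma one_sub_ne_zero (hw : Admissible x z w) : 1 - w ≠ 0 := by simpa using hw 0 0

lemma add_x (hw : Admissible x z w) : Admissible x z (w + x) := fun a b ↦ by
  simpa [add_mul, sub_add_eq_sub_sub, sub_right_comm _ x] using hw (a + 1) b

lemma add_nat_mul_z (hw : Admissible x z w) (k : ℕ) : Admissible x z (w + k * z) := fun a b ↦ by
  convert hw a (b + k) using 1; push_cast; ring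

end Admissible

section Slope

variable {x z : F3}

/-- `(Ǧ_n(w + x) - Ǧ_n(w)) / x` by `Gcheck_add_x`, written so that it makes sense also for `x = 0`. -/
def GcheckSlope (x z : F3) (n : ℕ) (w : F3) : F3 :=
  ∑ p ∈ antidiagonal n,
    (p.2 + 1 : F3) * Gcheck x z p.1 w * Gcheck x z (p.2 + 1) (w + x + ((p.1 : F3) - 1) * z)

@[simp] lemma GcheckSlope_zero (w : F3) : GcheckSlope x z 0 w = 0 := by simp [GcheckSlope]

lemma GcheckSlope_one (w : F3) : GcheckSlope x z 1 w = Gcheck x z 1 w * Gcheck x z 1 (w + x) := by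
  simp [GcheckSlope, Nat.sum_antidiagonal_succ]

lemma one_sub_mul_GcheckSlope {w : F3} (hw : 1 - w ≠ 0) (n : ℕ) :
    (1 - w) * GcheckSlope x z n w = n * Gcheck x z n (w + x) +
      ∑ p ∈ antidiagonal n, Gcheck x z p.1 (w + x) * GcheckSlope x z p.2 (w + p.1 * z) := by
  set f : ℕ → ℕ → ℕ → F3 := fun a b j ↦ Gcheck x z a (w + x) *
    ((j + 1 : F3) * Gcheck x z b (w + a * z) *
      Gcheck x z (j + 1) (w + a * z + x + ((b : F3) - 1) * z))
  have hsplit : ∀ p ∈ antidiagonal n, (1 - w) * ((p.2 + 1 : F3) * Gcheck x z p.1 w *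
      Gcheck x z (p.2 + 1) (w + x + ((p.1 : F3) - 1) * z)) =
      (p.2 + 1 : F3) * (if p.1 = 1 then 1 else 0) *
        Gcheck x z (p.2 + 1) (w + x + ((p.1 : F3) - 1) * z) +
      ∑ q ∈ antidiagonal p.1, f q.1 q.2 p.2 := by
    rintro ⟨i, j⟩ -
    rw [show ∀ a b c : F3, (1 - w) * (a * b * c) = a * ((1 - w) * b) * c by intros; ring,
      one_sub_mul_Gcheck hw, mul_add, add_mul, mul_sum, sum_mul]
    refine congrArg _ (sum_congr rfl fun ⟨a, b⟩ hab ↦ ?_)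
    rw [HasAntidiagonal.mem_antidiagonal] at hab
    subst hab
    simp only [f]
    rw [Nat.cast_add, show w + x + ((a : F3) + b - 1) * z = w + a * z + x + (b - 1) * z by ring]
    ring
  have hleaf : ∑ p ∈ antidiagonal n, (p.2 + 1 : F3) * (if p.1 = 1 then 1 else 0) *
      Gcheck x z (p.2 + 1) (w + x + ((p.1 : F3) - 1) * z) = n * Gcheck x z n (w + x) := by
    rw [Nat.sum_antidiagonal_eq_sum_range_succ_mk]
    simp only [mul_ite, ite_mul, mul_one, mul_zero, zero_mul, sum_ite_eq', mem_range]
    split_ifs with hn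
    · simp [Nat.cast_sub (by omega : 1 ≤ n), Nat.sub_add_cancel (by omega : 1 ≤ n)]
    · obtain rfl : n = 0 := by omega
      simp
  simp only [GcheckSlope, mul_sum]
  rw [sum_congr rfl hsplit, sum_add_distrib, hleaf, Nat.sum_antidiagonal_antidiagonal_assoc]

end Slope

section Identity

variable {x z : F3}

lemma sum_GcheckSlope_mul_Gcheck (n : ℕ) {w : F3} (hw : Admissible x z w) :
    ∑ p ∈ antidiagonal n, GcheckSlope x z p.1 w * Gcheck x z p.2 (w + p.1 * z) =
      (n - 1) * Gcheck x z n w := by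
  induction n using Nat.strong_induction_on generalizing w with
  | _ n ih =>
  obtain rfl | hn := eq_or_ne n 1
  · simp [Nat.sum_antidiagonal_succ]
  have hrec := one_sub_mul_Gcheck (x := x) (z := z) hw.one_sub_ne_zero n
  rw [if_neg hn, zero_add] at hrec
  set g : ℕ → ℕ → ℕ → F3 := fun a b j ↦
    Gcheck x z a (w + x) * (GcheckSlope x z b (w + a * z) * Gcheck x z j (w + a * z + b * z))
  apply mul_left_cancel₀ hw.one_sub_ne_zero
  calc (1 - w) * ∑ p ∈ antidiagonal n, GcheckSlope x z p.1 w * Gcheck x z p.2 (w + p.1 * z)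
      = ∑ p ∈ antidiagonal n, p.1 * Gcheck x z p.1 (w + x) * Gcheck x z p.2 (w + p.1 * z) +
          ∑ p ∈ antidiagonal n, ∑ q ∈ antidiagonal p.1, g q.1 q.2 p.2 := by
        rw [mul_sum, ← sum_add_distrib]
        refine sum_congr rfl fun ⟨i, j⟩ _ ↦ ?_
        rw [← mul_assoc, one_sub_mul_GcheckSlope hw.one_sub_ne_zero, add_mul, sum_mul]
        refine congrArg _ (sum_congr rfl fun ⟨a, b⟩ hab ↦ ?_)
        rw [HasAntidiagonal.mem_antidiagonal] at hab
        subst hab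
        simp only [g]
        rw [Nat.cast_add, add_mul, ← add_assoc]
        ring
    _ = ∑ p ∈ antidiagonal n, p.1 * Gcheck x z p.1 (w + x) * Gcheck x z p.2 (w + p.1 * z) +
          ∑ p ∈ antidiagonal n, Gcheck x z p.1 (w + x) * ((p.2 - 1) * Gcheck x z p.2 (w + p.1 * z)) := by
        rw [Nat.sum_antidiagonal_antidiagonal_assoc]
        refine congrArg _ (sum_congr rfl fun ⟨i, j⟩ hij ↦ ?_)
        rw [HasAntidiagonal.mem_antidiagonal] at hij
        obtain rfl | hi := Nat.eq_zero_or_pos i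
        · simp [g]
        rw [← ih j (by omega) (hw.add_nat_mul_z i), mul_sum]
    _ = (n - 1) * ∑ p ∈ antidiagonal n, Gcheck x z p.1 (w + x) * Gcheck x z p.2 (w + p.1 * z) := by
        rw [← sum_add_distrib, mul_sum]
        refine sum_congr rfl fun ⟨i, j⟩ hij ↦ ?_
        rw [HasAntidiagonal.mem_antidiagonal] at hij
        subst hij
        push_cast; ring
    _ = (1 - w) * ((n - 1) * Gcheck x z n w) := by rw [← hrec]; ring

lemma Gcheck_add_x (n : ℕ) {w : F3} (hw : Admissible x z w) :
    Gcheck x z n (w + x) = Gcheck x z n w + x * GcheckSlope x z n w := by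
  induction n using Nat.strong_induction_on generalizing w with
  | _ n ih =>
  obtain rfl | rfl | hn := (by omega : n = 0 ∨ n = 1 ∨ 2 ≤ n)
  · simp
  · have h₁ := hw.one_sub_ne_zero
    have h₂ := hw.add_x.one_sub_ne_zero
    rw [GcheckSlope_one, Gcheck_one, Gcheck_one]
    field_simp
    ring
  have hterm : ∀ p ∈ antidiagonal n,
      Gcheck x z p.1 (w + x + x) * Gcheck x z p.2 (w + x + p.1 * z) =
        Gcheck x z p.1 (w + x) * Gcheck x z p.2 (w + p.1 * z) +
        x * (GcheckSlope x z p.1 (w + x) * Gcheck x z p.2 (w + x + p.1 * z)) +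
        x * (Gcheck x z p.1 (w + x) * GcheckSlope x z p.2 (w + p.1 * z)) := by
    rintro ⟨i, j⟩ hij
    rw [HasAntidiagonal.mem_antidiagonal] at hij
    obtain rfl | hi := Nat.eq_zero_or_pos i
    · simp
    obtain rfl | hj := Nat.eq_zero_or_pos j
    · simp
    rw [ih i (by omega) hw.add_x, show w + x + i * z = w + i * z + x by ring,
      ih j (by omega) (hw.add_nat_mul_z i)]
    ring
  have hrec_x := one_sub_mul_Gcheck (x := x) (z := z) hw.add_x.one_sub_ne_zero n
  rw [if_neg (by omega), zero_add, sum_congr rfl hterm, sum_add_distrib, sum_add_distrib,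
    ← mul_sum, ← mul_sum] at hrec_x
  have hrec := one_sub_mul_Gcheck (x := x) (z := z) hw.one_sub_ne_zero n
  rw [if_neg (by omega), zero_add] at hrec
  apply mul_left_cancel₀ hw.one_sub_ne_zero
  linear_combination hrec_x - hrec + x * sum_GcheckSlope_mul_Gcheck n hw.add_x -
    x * one_sub_mul_GcheckSlope (z := z) hw.one_sub_ne_zero n

lemma one_sub_sub_mul_Gcheck {n : ℕ} (hn : n ≠ 1) {w : F3} (hw : Admissible x z w) :
    (1 - w - (n - 1) * x) * Gcheck x z n w =
      ∑ p ∈ antidiagonal n, Gcheck x z p.1 w * Gcheck x z p.2 (w + p.1 * z) := by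
  have hrec := one_sub_mul_Gcheck (x := x) (z := z) hw.one_sub_ne_zero n
  rw [if_neg hn, zero_add] at hrec
  have hshift : ∀ p ∈ antidiagonal n, Gcheck x z p.1 w * Gcheck x z p.2 (w + p.1 * z) =
      Gcheck x z p.1 (w + x) * Gcheck x z p.2 (w + p.1 * z) -
        x * (GcheckSlope x z p.1 w * Gcheck x z p.2 (w + p.1 * z)) := fun p _ ↦ by
    rw [Gcheck_add_x _ hw]; ring
  rw [sum_congr rfl hshift, sum_sub_distrib, ← mul_sum, sum_GcheckSlope_mul_Gcheck n hw, ← hrec]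
  ring

lemma Ghat_eq_Gcheck_of_admissible (n : ℕ) {w : F3} (hw : Admissible x z w) :
    Ghat x z n w = Gcheck x z n w := by
  induction n using Nat.strong_induction_on generalizing w with
  | _ n ih =>
  obtain rfl | rfl | hn := (by omega : n = 0 ∨ n = 1 ∨ 2 ≤ n)
  · simp
  · rw [Ghat_one, Gcheck_one]
  have hden : 1 - w - (n - 1) * x ≠ 0 := by
    simpa [Nat.cast_sub (by omega : 1 ≤ n)] using hw.one_sub_sub_ne_zero (n - 1)
  apply mul_left_cancel₀ hden
  rw [one_sub_sub_mul_Ghat (by omega) hden, one_sub_sub_mul_Gcheck (by omega) hw]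
  refine sum_congr rfl fun ⟨i, j⟩ hij ↦ ?_
  rw [HasAntidiagonal.mem_antidiagonal] at hij
  obtain rfl | hi := Nat.eq_zero_or_pos i
  · simp
  obtain rfl | hj := Nat.eq_zero_or_pos j
  · simp
  rw [ih i (by omega) hw, ih j (by omega) (hw.add_nat_mul_z i)]

end Identity

lemma admissible_W : Admissible Xv Zv W := fun a b h ↦ by
  have hpoly : (1 : F3) - W - a * Xv - b * Zv = algebraMap (MvPolynomial (Fin 3) ℚ) F3
      (1 - X 0 - (a : MvPolynomial (Fin 3) ℚ) * X 1 - (b : MvPolynomial (Fin 3) ℚ) * X 2) := by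
    simp [W, Xv, Zv]
  rw [hpoly, map_eq_zero_iff _ (IsFractionRing.injective _ _)] at h
  simpa using congrArg constantCoeff h

theorem Ghat_eq_Gcheck : ∀ n : ℕ, 1 ≤ n → Ghat Xv Zv n W = Gcheck Xv Zv n W :=
  fun n _ ↦ Ghat_eq_Gcheck_of_admissible n admissible_W

end
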